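/- arXiv:2104.03649 — 5 statements merged into one kernel-verified Lean document; each statement's English description precedes it below -/
import Mathlib

section
/- Let n ≥ 1 and let A be an n×n real matrix that is nonnegative, row-stochastic (every row sums to 1), and irreducible. Then there exists a unique vector π ∈ ℝⁿ with nonnegative entries such that the entries of π sum to 1 and πᵀA = πᵀ (i.e., π is a left eigenvector of A for the eigenvalue 1). -/
open Matrix Finset

section aux

variable {n : ℕ} (A : Matrix (Fin n) (Fin n) ℝ)

/-- entries of powers of a nonneg matrix are nonneg -/
lemma aux_pow_nonneg (hA : ∀ i j, 0 ≤ A i j) : ∀ k i j, 0 ≤ (A ^ k) i j := by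
  intro k
  induction k with
  | zero => intro i j; simp [Matrix.one_apply]; split <;> norm_num
  | succ k ih =>
    intro i j
    rw [pow_succ, Matrix.mul_apply]
    exact Finset.sum_nonneg fun l _ => mul_nonneg (ih i l) (hA l j)

lemma aux_vecMul_pow {v : Fin n → ℝ} (hv : Matrix.vecMul v A = v) :
    ∀ k, Matrix.vecMul v (A ^ k) = v := by
  intro k
  induction k with
  | zero => simp
  | succ k ih => rw [pow_succ, ← Matrix.vecMul_vecMul, ih, hv]

/-- if v is fixed, column sums of A being mass-preserving forces |v| fixed -/
lemma aux_abs_fixed (hA : ∀ i j, 0 ≤ A i j) (hrow : ∀ i, ∑ j, A i j = 1)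
    {v : Fin n → ℝ} (hv : Matrix.vecMul v A = v) :
    Matrix.vecMul (fun i => |v i|) A = (fun i => |v i|) := by
  set w : Fin n → ℝ := fun i => |v i| with hw
  have hle : ∀ j, w j ≤ Matrix.vecMul w A j := by
    intro j
    have : v j = ∑ i, v i * A i j := by
      conv_lhs => rw [← hv]
      simp [Matrix.vecMul, dotProduct]
    calc w j = |∑ i, v i * A i j| := by rw [hw]; simp only [← this]
      _ ≤ ∑ i, |v i * A i j| := Finset.abs_sum_le_sum_abs _ _
      _ = ∑ i, w i * A i j := by
          apply Finset.sum_congr rfl; intro i _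
          rw [abs_mul, abs_of_nonneg (hA i j)]
      _ = Matrix.vecMul w A j := rfl
  have hsum : ∑ j, Matrix.vecMul w A j = ∑ j, w j := by
    calc ∑ j, Matrix.vecMul w A j = ∑ j, ∑ i, w i * A i j := rfl
      _ = ∑ i, ∑ j, w i * A i j := Finset.sum_comm
      _ = ∑ i, w i * ∑ j, A i j := by simp [Finset.mul_sum]
      _ = ∑ i, w i := by simp [hrow]
  have hzero : ∑ j, (Matrix.vecMul w A j - w j) = 0 := by
    rw [Finset.sum_sub_distrib, hsum, sub_self]
  have := (Finset.sum_eq_zero_iff_of_nonneg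
    (fun j _ => sub_nonneg.2 (hle j))).1 hzero
  funext j
  have := this j (Finset.mem_univ j)
  linarith [this]

/-- positivity of stationary distributions of irreducible matrices -/
lemma aux_pos (hA : ∀ i j, 0 ≤ A i j)
    (hirr : ∀ i j, ∃ k : ℕ, 0 < k ∧ 0 < (A ^ k) i j)
    {π : Fin n → ℝ} (hnn : ∀ i, 0 ≤ π i) (hs : ∑ i, π i = 1)
    (hst : Matrix.vecMul π A = π) : ∀ i, 0 < π i := by
  by_contra h
  push_neg at h
  obtain ⟨j, hj⟩ := h
  have hj0 : π j = 0 := le_antisymm hj (hnn j)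
  have hall : ∀ i, π i = 0 := by
    intro i
    obtain ⟨k, -, hk⟩ := hirr i j
    have hfix := aux_vecMul_pow A hst k
    have hji : π j = ∑ l, π l * (A ^ k) l j := by
      conv_lhs => rw [← hfix]
      simp [Matrix.vecMul, dotProduct]
    have hterms : ∀ l ∈ Finset.univ, (0:ℝ) ≤ π l * (A ^ k) l j :=
      fun l _ => mul_nonneg (hnn l) (aux_pow_nonneg A hA k l j)
    have := (Finset.sum_eq_zero_iff_of_nonneg hterms).1 (hji.symm.trans hj0) i
      (Finset.mem_univ i)
    rcases mul_eq_zero.1 this with h1 | h2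
    · exact h1
    · exact absurd h2 (ne_of_gt hk)
  rw [Finset.sum_eq_zero (fun i _ => hall i)] at hs
  norm_num at hs

end aux

/-- An irreducible row-stochastic nonnegative matrix has a unique
nonnegative left eigenvector for eigenvalue 1 whose entries sum to 1. -/
theorem stmt_0 (n : ℕ) (hn : 1 ≤ n) (A : Matrix (Fin n) (Fin n) ℝ)
    (hA_nonneg : ∀ i j, 0 ≤ A i j)
    (hA_row : ∀ i, ∑ j, A i j = 1)
    (hA_irr : ∀ i j, ∃ k : ℕ, 0 < k ∧ 0 < (A ^ k) i j) :
    ∃! π : Fin n → ℝ,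
      (∀ i, 0 ≤ π i) ∧ (∑ i, π i = 1) ∧ Matrix.vecMul π A = π := by
  -- step 1: det (A - 1) = 0 via right eigenvector of ones
  have hdet : (A - 1).det = 0 := by
    rw [← Matrix.exists_mulVec_eq_zero_iff]
    refine ⟨fun _ => 1, ?_, ?_⟩
    · intro h
      have := congrFun h ⟨0, hn⟩
      norm_num at this
    · rw [Matrix.sub_mulVec, Matrix.one_mulVec]
      funext i
      simp [Matrix.mulVec, dotProduct, hA_row i, sub_eq_zero]
  have hdetT : ((A - 1)ᵀ).det = 0 := by rw [Matrix.det_transpose]; exact hdet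
  obtain ⟨v, hv0, hvfix⟩ := Matrix.exists_mulVec_eq_zero_iff.2 hdetT
  have hvst : Matrix.vecMul v A = v := by
    have h0 : (A - 1)ᵀ.mulVec v = Matrix.vecMul v (A - 1) := Matrix.mulVec_transpose _ _
    rw [hvfix] at h0
    rw [Matrix.vecMul_sub, Matrix.vecMul_one] at h0
    exact sub_eq_zero.1 h0.symm
  -- |v| is a nonneg fixed vector with positive sum
  set w : Fin n → ℝ := fun i => |v i| with hw
  have hwst : Matrix.vecMul w A = w := aux_abs_fixed A hA_nonneg hA_row hvst
  have hwnn : ∀ i, 0 ≤ w i := fun i => abs_nonneg _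
  have hwsum : 0 < ∑ i, w i := by
    rcases Function.ne_iff.1 hv0 with ⟨i, hi⟩
    have : 0 < w i := abs_pos.2 hi
    exact lt_of_lt_of_le this (Finset.single_le_sum (fun j _ => hwnn j)
      (Finset.mem_univ i))
  set s : ℝ := ∑ i, w i with hs
  set π : Fin n → ℝ := fun i => w i / s with hπ
  have hπnn : ∀ i, 0 ≤ π i := fun i => div_nonneg (hwnn i) hwsum.le
  have hπsum : ∑ i, π i = 1 := by
    rw [hπ]
    rw [← Finset.sum_div]
    exact div_self hwsum.ne'
  have hπst : Matrix.vecMul π A = π := by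
    have : π = s⁻¹ • w := by funext i; simp [hπ, div_eq_inv_mul, smul_eq_mul]
    rw [this, Matrix.smul_vecMul, hwst]
  refine ⟨π, ⟨hπnn, hπsum, hπst⟩, ?_⟩
  -- uniqueness
  rintro μ ⟨hμnn, hμsum, hμst⟩
  by_contra hne
  set d : Fin n → ℝ := μ - π with hd
  have hd0 : d ≠ 0 := fun h => hne (by
    have := sub_eq_zero.1 h
    exact this)
  have hdst : Matrix.vecMul d A = d := by
    rw [hd, Matrix.sub_vecMul, hμst, hπst]
  have hdsum : ∑ i, d i = 0 := by
    simp only [hd, Pi.sub_apply, Finset.sum_sub_distrib, hμsum, hπsum, sub_self]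
  have habs : Matrix.vecMul (fun i => |d i|) A = fun i => |d i| :=
    aux_abs_fixed A hA_nonneg hA_row hdst
  -- positive part p
  set p : Fin n → ℝ := fun i => (|d i| + d i) / 2 with hp
  have hpst : Matrix.vecMul p A = p := by
    have h2 : p = (2:ℝ)⁻¹ • ((fun i => |d i|) + d) := by
      funext i; simp [hp, smul_eq_mul]; ring
    rw [h2, Matrix.smul_vecMul, Matrix.add_vecMul, habs, hdst]
  have hpnn : ∀ i, 0 ≤ p i := by
    intro i; rw [hp]
    have := neg_abs_le (d i)
    simp only
    linarith
  have hpsum : ∑ i, p i = (∑ i, |d i|) / 2 := by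
    rw [hp]
    rw [← Finset.sum_div]
    rw [Finset.sum_add_distrib, hdsum, add_zero]
  have habspos : 0 < ∑ i, |d i| := by
    rcases Function.ne_iff.1 hd0 with ⟨i, hi⟩
    exact lt_of_lt_of_le (abs_pos.2 hi)
      (Finset.single_le_sum (f := fun j => |d j|) (fun j _ => abs_nonneg _)
        (Finset.mem_univ i))
  have hpsumpos : 0 < ∑ i, p i := by rw [hpsum]; positivity
  -- normalized p is a stationary distribution, hence positive everywhere
  set t : ℝ := ∑ i, p i with ht
  set q : Fin n → ℝ := fun i => p i / t with hq
  have hqst : Matrix.vecMul q A = q := by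
    have : q = t⁻¹ • p := by funext i; simp [hq, div_eq_inv_mul, smul_eq_mul]
    rw [this, Matrix.smul_vecMul, hpst]
  have hqnn : ∀ i, 0 ≤ q i := fun i => div_nonneg (hpnn i) hpsumpos.le
  have hqsum : ∑ i, q i = 1 := by
    have : ∑ i, q i = (∑ i, p i) / t := by
      simp only [hq]; rw [← Finset.sum_div]
    rw [this, ← ht]
    exact div_self hpsumpos.ne'
  have hqpos : ∀ i, 0 < q i := aux_pos A hA_nonneg hA_irr hqnn hqsum hqst
  -- but d has a nonpositive entry (since sum d = 0 and d ≠ 0), giving p = 0 there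
  have hppos : ∀ i, 0 < p i := by
    intro i
    have := hqpos i
    rw [hq] at this
    simp only at this
    exact (div_pos_iff.1 this).resolve_right (fun ⟨_, h⟩ => absurd h (not_lt.2 hpsumpos.le)) |>.1
  have hdpos : ∀ i, 0 < d i := by
    intro i
    have := hppos i
    rw [hp] at this
    simp only at this
    rcases lt_trichotomy (d i) 0 with h | h | h
    · rw [abs_of_neg h] at this; linarith
    · rw [h, abs_zero] at this; norm_num at this
    · exact h
  have : 0 < ∑ i, d i := Finset.sum_pos (fun i _ => hdpos i) ⟨⟨0, hn⟩, Finset.mem_univ _⟩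
  rw [hdsum] at this
  exact lt_irrefl 0 this
end

section
/- Let n ≥ 1 and let B be an n×n real matrix that is nonnegative, column-stochastic (every column sums to 1), and irreducible. Then there exists a unique vector π ∈ ℝⁿ with nonnegative entries such that the entries of π sum to 1 and Bπ = π (i.e., π is a right eigenvector of B for the eigenvalue 1). -/
/-- An irreducible column-stochastic nonnegative matrix has a unique
nonnegative right eigenvector for eigenvalue 1 whose entries sum to 1. -/
theorem stmt_1 (n : ℕ) (hn : 1 ≤ n) (B : Matrix (Fin n) (Fin n) ℝ)
    (hB_nonneg : ∀ i j, 0 ≤ B i j)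
    (hB_col : ∀ j, ∑ i, B i j = 1)
    (hB_irr : ∀ i j, ∃ k : ℕ, 0 < k ∧ 0 < (B ^ k) i j) :
    ∃! π : Fin n → ℝ,
      (∀ i, 0 ≤ π i) ∧ (∑ i, π i = 1) ∧ Matrix.mulVec B π = π := by
  have hFin : Nonempty (Fin n) := ⟨⟨0, hn⟩⟩
  -- powers are nonnegative
  have hpow : ∀ k (i j : Fin n), 0 ≤ (B ^ k) i j := by
    intro k
    induction k with
    | zero => intro i j; simp [Matrix.one_apply]; split <;> norm_num
    | succ m ih =>
      intro i j
      rw [pow_succ, Matrix.mul_apply]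
      exact Finset.sum_nonneg fun l _ => mul_nonneg (ih i l) (hB_nonneg l j)
  -- fixed vectors are fixed by powers
  have hfix : ∀ (w : Fin n → ℝ), B.mulVec w = w → ∀ k, (B ^ k).mulVec w = w := by
    intro w hw k
    induction k with
    | zero => simp
    | succ m ih => rw [pow_succ, ← Matrix.mulVec_mulVec, hw, ih]
  -- positivity of nonzero nonnegative fixed vectors
  have hpos : ∀ (w : Fin n → ℝ), (∀ i, 0 ≤ w i) → w ≠ 0 → B.mulVec w = w →
      ∀ j, 0 < w j := by
    intro w hw0 hwne hw j
    obtain ⟨i, hi⟩ : ∃ i, 0 < w i := by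
      by_contra h
      push_neg at h
      exact hwne (funext fun i => le_antisymm (h i) (hw0 i))
    obtain ⟨k, hk, hBk⟩ := hB_irr j i
    have hwk := hfix w hw k
    have hj : w j = ∑ l, (B ^ k) j l * w l := by
      conv_lhs => rw [← hwk]
      rfl
    rw [hj]
    have : (B ^ k) j i * w i ≤ ∑ l, (B ^ k) j l * w l :=
      Finset.single_le_sum (fun l _ => mul_nonneg (hpow k j l) (hw0 l))
        (Finset.mem_univ i)
    exact lt_of_lt_of_le (mul_pos hBk hi) this
  -- sum of mulVec equals sum (column stochasticity)
  have hsum : ∀ (w : Fin n → ℝ), ∑ j, (B.mulVec w) j = ∑ i, w i := by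
    intro w
    simp only [Matrix.mulVec, dotProduct]
    rw [Finset.sum_comm]
    refine Finset.sum_congr rfl fun i _ => ?_
    rw [← Finset.sum_mul, hB_col i, one_mul]
  -- existence of a nonzero fixed vector
  have hdet : (B - 1).det = 0 := by
    rw [← Matrix.exists_vecMul_eq_zero_iff]
    refine ⟨fun _ => 1, ?_, ?_⟩
    · intro h
      have := congrFun h ⟨0, hn⟩
      norm_num at this
    · funext j
      simp [Matrix.vecMul, dotProduct, Matrix.sub_apply, Matrix.one_apply,
        Finset.sum_sub_distrib, hB_col j]
  obtain ⟨v, hvne, hv⟩ := (Matrix.exists_mulVec_eq_zero_iff).2 hdet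
  have hBv : B.mulVec v = v := by
    have := hv
    rw [Matrix.sub_mulVec, Matrix.one_mulVec, sub_eq_zero] at this
    exact this
  set u : Fin n → ℝ := fun i => |v i| with hu
  have hu0 : ∀ i, 0 ≤ u i := fun i => abs_nonneg _
  have hune : u ≠ 0 := by
    intro h
    apply hvne
    funext i
    have := congrFun h i
    simpa [hu, abs_eq_zero] using this
  have hle : ∀ j, u j ≤ (B.mulVec u) j := by
    intro j
    have : |(B.mulVec v) j| ≤ (B.mulVec u) j := by
      simp only [Matrix.mulVec, dotProduct]
      calc |∑ i, B j i * v i| ≤ ∑ i, |B j i * v i| := Finset.abs_sum_le_sum_abs _ _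
        _ = ∑ i, B j i * |v i| := by
            refine Finset.sum_congr rfl fun i _ => ?_
            rw [abs_mul, abs_of_nonneg (hB_nonneg j i)]
    rw [hBv] at this
    exact this
  have hBu : B.mulVec u = u := by
    have hz : ∑ j, ((B.mulVec u) j - u j) = 0 := by
      rw [Finset.sum_sub_distrib, hsum u, sub_self]
    have := (Finset.sum_eq_zero_iff_of_nonneg
      (fun j _ => sub_nonneg.2 (hle j))).1 hz
    funext j
    have := this j (Finset.mem_univ j)
    linarith [sub_eq_zero.1 this]
  have hupos : ∀ j, 0 < u j := hpos u hu0 hune hBu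
  set s : ℝ := ∑ i, u i with hs
  have hspos : 0 < s := Finset.sum_pos (fun i _ => hupos i) Finset.univ_nonempty
  refine ⟨fun i => s⁻¹ * u i, ⟨?_, ?_, ?_⟩, ?_⟩
  · intro i; positivity
  · rw [← Finset.mul_sum, ← hs, inv_mul_cancel₀ hspos.ne']
  · funext j
    have : B.mulVec (fun i => s⁻¹ * u i) = s⁻¹ • B.mulVec u := by
      rw [← Matrix.mulVec_smul]
      congr 1
    rw [this, hBu]
    rfl
  · -- uniqueness
    intro σ ⟨hσ0, hσ1, hσB⟩
    -- first show any two solutions are equal; apply to σ and our π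
    have key : ∀ π₁ π₂ : Fin n → ℝ, (∀ i, 0 ≤ π₁ i) → (∑ i, π₁ i = 1) →
        B.mulVec π₁ = π₁ → (∀ i, 0 ≤ π₂ i) → (∑ i, π₂ i = 1) →
        B.mulVec π₂ = π₂ → π₁ = π₂ := by
      intro π₁ π₂ h10 h11 h1B h20 h21 h2B
      have h1ne : π₁ ≠ 0 := by
        intro h; rw [h] at h11; simp at h11
      have h2ne : π₂ ≠ 0 := by
        intro h; rw [h] at h21; simp at h21
      have h1pos := hpos π₁ h10 h1ne h1B
      have h2pos := hpos π₂ h20 h2ne h2B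
      obtain ⟨j, -, hjmin⟩ := Finset.exists_min_image Finset.univ
        (fun i => π₁ i / π₂ i) Finset.univ_nonempty
      set t : ℝ := π₁ j / π₂ j with ht
      have htpos : 0 < t := div_pos (h1pos j) (h2pos j)
      set w : Fin n → ℝ := fun i => π₁ i - t * π₂ i with hw
      have hw0 : ∀ i, 0 ≤ w i := by
        intro i
        have := hjmin i (Finset.mem_univ i)
        have h2 : t * π₂ i ≤ π₁ i := (le_div_iff₀ (h2pos i)).1 this
        simpa [hw] using sub_nonneg.2 h2
      have hwB : B.mulVec w = w := by
        have : w = π₁ - t • π₂ := by funext i; simp [hw]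
        rw [this, Matrix.mulVec_sub, Matrix.mulVec_smul, h1B, h2B]
      have hwj : w j = 0 := by
        show π₁ j - t * π₂ j = 0
        rw [ht, div_mul_cancel₀ _ (h2pos j).ne', sub_self]
      by_cases hwz : w = 0
      · have hteq : t = 1 := by
          have : ∑ i, π₁ i = t * ∑ i, π₂ i := by
            rw [Finset.mul_sum]
            refine Finset.sum_congr rfl fun i _ => ?_
            have := congrFun hwz i
            simp [hw] at this
            linarith
          rw [h11, h21, mul_one] at this
          linarith
        funext i
        have := congrFun hwz i
        simp [hw, hteq] at this
        linarith
      · exact absurd hwj (hpos w hw0 hwz hwB j).ne'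
    exact key σ (fun i => s⁻¹ * u i) hσ0 hσ1 hσB
      (fun i => by positivity)
      (by rw [← Finset.mul_sum, ← hs, inv_mul_cancel₀ hspos.ne'])
      (by funext j
          have : B.mulVec (fun i => s⁻¹ * u i) = s⁻¹ • B.mulVec u := by
            rw [← Matrix.mulVec_smul]; congr 1
          rw [this, hBu]; rfl)
end

section
/- Let n ≥ 1, let A be an n×n real matrix that is nonnegative, row-stochastic, and irreducible, and let α ∈ (0,1). Set A_α = (1−α)I + αA. Let π ∈ ℝⁿ be a nonnegative vector with entries summing to 1 and πᵀA = πᵀ. Then the spectral radius of A_α − 𝟏πᵀ is strictly less than 1, where 𝟏 ∈ ℝⁿ is the all-ones vector. -/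
/-!
The row vector `πᵀ` annihilates `B = A_α - 𝟏πᵀ`, so an eigenvector `v` of `B` for an eigenvalue
`z ≠ 0` satisfies `πᵀv = 0` and is then an eigenvector of `A_α` for `z`. The matrix `A_α` is
stochastic with positive diagonal, so by Gershgorin its eigenvalues lie in discs internally tangent
to the unit circle at `1`: hence `|z| < 1` unless `z = 1`. The case `z = 1` is impossible: a fixed
vector of `A_α` is fixed by `A`, hence constant by the maximum principle and irreducibility, and the
only constant vector with `πᵀv = 0` is `0`.
-/

/-- The spectral radius of a real square matrix: the maximum modulus of the complex
roots of its characteristic polynomial. -/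
noncomputable def specRad {n : ℕ} (M : Matrix (Fin n) (Fin n) ℝ) : ℝ :=
  sSup {x : ℝ | ∃ z ∈ (M.map (Complex.ofReal : ℝ → ℂ)).charpoly.roots, ‖z‖ = x}

open Matrix Module.End

theorem Complex.eq_one_or_norm_lt_one_of_norm_sub_le {z : ℂ} {d : ℝ} (hd : 0 < d)
    (h : ‖z - d‖ ≤ 1 - d) : z = 1 ∨ ‖z‖ < 1 := by
  by_contra! hz
  have hd1 : 0 ≤ 1 - d := (norm_nonneg _).trans h
  have hdisc : (z.re - d) ^ 2 + z.im ^ 2 ≤ (1 - d) ^ 2 := by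
    have := pow_le_pow_left₀ (norm_nonneg _) h 2
    rwa [Complex.sq_norm, Complex.normSq_apply, Complex.sub_re, Complex.sub_im,
      Complex.ofReal_re, Complex.ofReal_im, sub_zero, ← sq, ← sq] at this
  have hcircle : 1 ≤ z.re ^ 2 + z.im ^ 2 := by
    have := pow_le_pow_left₀ zero_le_one hz.2 2
    rwa [one_pow, Complex.sq_norm, Complex.normSq_apply, ← sq, ← sq] at this
  have hre : 1 ≤ z.re := by nlinarith
  have hre_sq : (1 - d) ^ 2 ≤ (z.re - d) ^ 2 := pow_le_pow_left₀ hd1 (by linarith) 2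
  have him : z.im = 0 := by nlinarith
  have hre' : z.re ≤ 1 := by nlinarith
  exact hz.1 (Complex.ext (by simp; linarith) (by simpa using him))

theorem specRad_lt_of_forall_norm_lt {n : ℕ} (M : Matrix (Fin n) (Fin n) ℝ) {r : ℝ} (hr : 0 < r)
    (h : ∀ z ∈ (M.map (Complex.ofReal : ℝ → ℂ)).charpoly.roots, ‖z‖ < r) : specRad M < r := by
  set S := {x : ℝ | ∃ z ∈ (M.map (Complex.ofReal : ℝ → ℂ)).charpoly.roots, ‖z‖ = x}
  change sSup S < r
  rcases S.eq_empty_or_nonempty with hempty | hne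
  · rwa [hempty, Real.sSup_empty]
  have hfin : S.Finite := by
    convert (Multiset.finite_toSet (M.map (Complex.ofReal : ℝ → ℂ)).charpoly.roots).image (‖·‖)
    ext; simp [S]
  rw [hfin.csSup_lt_iff hne]
  rintro _ ⟨z, hz, rfl⟩
  exact h z hz

namespace Matrix

variable {ι : Type*} [Fintype ι]

theorem dotProduct_eq_zero_and_mulVec_eq_smul {K : Type*} [Field K]
    {P : Matrix ι ι K} {p v : ι → K} {z : K} (hpP : p ᵥ* P = p) (hp : ∑ i, p i = 1) (hz : z ≠ 0)
    (hv : (P - of fun _ j => p j) *ᵥ v = z • v) : p ⬝ᵥ v = 0 ∧ P *ᵥ v = z • v := by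
  have hker : p ᵥ* (P - of fun _ j => p j) = 0 := by
    ext j
    have := congrFun hpP j
    simp only [vecMul, dotProduct] at this
    simp [vecMul, dotProduct, mul_sub, Finset.sum_sub_distrib, ← Finset.sum_mul, hp, this]
  have hzpv : z * (p ⬝ᵥ v) = 0 := by
    rw [← smul_eq_mul, ← dotProduct_smul, ← hv, dotProduct_mulVec, hker, zero_dotProduct]
  have hpv : p ⬝ᵥ v = 0 := (mul_eq_zero.1 hzpv).resolve_left hz
  refine ⟨hpv, ?_⟩
  rw [← hv, sub_mulVec]
  ext i
  simp [mulVec, hpv]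

variable [DecidableEq ι]

theorem exists_mulVec_eq_smul_of_mem_roots_charpoly {K : Type*} [Field K]
    {M : Matrix ι ι K} {z : K} (hz : z ∈ M.charpoly.roots) : ∃ v ≠ 0, M *ᵥ v = z • v := by
  have : HasEigenvalue (toLin' M) z := by
    rw [hasEigenvalue_iff_isRoot_charpoly, charpoly_toLin']
    exact Polynomial.isRoot_of_mem_roots hz
  obtain ⟨v, hv, hv0⟩ := this.exists_hasEigenvector
  exact ⟨v, hv0, by simpa using mem_eigenspace_iff.1 hv⟩

section Stochastic

variable {A : Matrix ι ι ℝ}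

theorem eq_one_or_norm_lt_one_of_mulVec_eq_smul (hA : A ∈ rowStochastic ℝ ι)
    (hdiag : ∀ i, 0 < A i i) {z : ℂ} {v : ι → ℂ} (hv0 : v ≠ 0)
    (hv : A.map Complex.ofReal *ᵥ v = z • v) : z = 1 ∨ ‖z‖ < 1 := by
  have : HasEigenvalue (toLin' (A.map Complex.ofReal)) z :=
    hasEigenvalue_of_hasEigenvector ⟨by simpa [mem_eigenspace_iff] using hv, hv0⟩
  obtain ⟨k, hk⟩ := eigenvalue_mem_ball this
  refine Complex.eq_one_or_norm_lt_one_of_norm_sub_le (hdiag k) ?_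
  rw [mem_closedBall_iff_norm] at hk
  have habs : ∀ j, |A k j| = A k j := fun j => abs_of_nonneg (nonneg_of_mem_rowStochastic hA)
  simpa [habs, Finset.sum_erase_eq_sub, sum_row_of_mem_rowStochastic hA] using hk

theorem map_ofReal_mulVec_eq_self_of_lazy {α : ℝ} (hα : α ≠ 0) {v : ι → ℂ}
    (hv : ((1 - α) • 1 + α • A).map Complex.ofReal *ᵥ v = v) :
    A.map Complex.ofReal *ᵥ v = v := by
  have hmap : ((1 - α) • 1 + α • A).map Complex.ofReal =
      (1 - (α : ℂ)) • 1 + (α : ℂ) • A.map Complex.ofReal := by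
    ext i j
    by_cases h : i = j <;> simp [h]
  rw [hmap, add_mulVec, smul_mulVec, smul_mulVec, one_mulVec] at hv
  have : (α : ℂ) • (A.map Complex.ofReal *ᵥ v) = (α : ℂ) • v := by
    linear_combination (norm := module) hv
  exact smul_right_injective _ (Complex.ofReal_ne_zero.2 hα) this

theorem apply_eq_of_mulVec_eq_self_of_le (hA : A ∈ rowStochastic ℝ ι) {w : ι → ℝ}
    (hw : A *ᵥ w = w) {i : ι} (hi : ∀ k, w k ≤ w i) {j : ι} (hij : 0 < A i j) : w j = w i := by
  have hsum : ∑ l, A i l * w l = ∑ l, A i l * w i := by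
    rw [← Finset.sum_mul, sum_row_of_mem_rowStochastic hA, one_mul]
    exact congrFun hw i
  have := (Finset.sum_eq_sum_iff_of_le (f := fun l => A i l * w l) fun l _ =>
    mul_le_mul_of_nonneg_left (hi l) (nonneg_of_mem_rowStochastic hA)).1 hsum j
      (Finset.mem_univ j)
  exact mul_left_cancel₀ hij.ne' this

theorem apply_eq_apply_of_mulVec_eq_self (hA : A ∈ rowStochastic ℝ ι)
    (hirr : ∀ i j, ∃ k : ℕ, 0 < (A ^ k) i j) {w : ι → ℝ} (hw : A *ᵥ w = w) (i j : ι) :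
    w i = w j := by
  obtain ⟨m, -, hm⟩ := Finset.exists_max_image Finset.univ w ⟨i, Finset.mem_univ i⟩
  have hpow : ∀ k : ℕ, (A ^ k) *ᵥ w = w := fun k => by
    induction k with
    | zero => simp
    | succ k ih => rw [pow_succ, ← mulVec_mulVec, hw, ih]
  have heq : ∀ l, w l = w m := fun l => by
    obtain ⟨k, hk⟩ := hirr m l
    exact apply_eq_of_mulVec_eq_self_of_le (pow_mem hA k) (hpow k)
      (fun l => hm l (Finset.mem_univ l)) hk
  rw [heq i, heq j]

theorem apply_eq_apply_of_map_ofReal_mulVec_eq_self (hA : A ∈ rowStochastic ℝ ι)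
    (hirr : ∀ i j, ∃ k : ℕ, 0 < (A ^ k) i j) {v : ι → ℂ}
    (hv : A.map Complex.ofReal *ᵥ v = v) (i j : ι) : v i = v j := by
  have hre : A *ᵥ (fun i => (v i).re) = fun i => (v i).re := funext fun i => by
    simpa [mulVec, dotProduct, Complex.re_sum] using congrArg Complex.re (congrFun hv i)
  have him : A *ᵥ (fun i => (v i).im) = fun i => (v i).im := funext fun i => by
    simpa [mulVec, dotProduct, Complex.im_sum] using congrArg Complex.im (congrFun hv i)
  exact Complex.ext (apply_eq_apply_of_mulVec_eq_self hA hirr hre i j)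
    (apply_eq_apply_of_mulVec_eq_self hA hirr him i j)

theorem eq_zero_of_map_ofReal_mulVec_eq_self (hA : A ∈ rowStochastic ℝ ι)
    (hirr : ∀ i j, ∃ k : ℕ, 0 < (A ^ k) i j) {p v : ι → ℂ} (hp : ∑ i, p i = 1)
    (hv : A.map Complex.ofReal *ᵥ v = v) (hpv : p ⬝ᵥ v = 0) : v = 0 := by
  funext j
  have hconst := apply_eq_apply_of_map_ofReal_mulVec_eq_self hA hirr hv
  rw [Pi.zero_apply, ← hpv, dotProduct, Finset.sum_congr rfl fun i _ => by rw [hconst i j],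
    ← Finset.sum_mul, hp, one_mul]

end Stochastic

end Matrix

theorem stmt_2_general (n : ℕ) (A : Matrix (Fin n) (Fin n) ℝ) (α : ℝ)
    (hα0 : 0 < α) (hα1 : α < 1)
    (hA_nonneg : ∀ i j, 0 ≤ A i j)
    (hA_row : ∀ i, ∑ j, A i j = 1)
    (hA_irr : ∀ i j, ∃ k : ℕ, 0 < k ∧ 0 < (A ^ k) i j)
    (π : Fin n → ℝ) (hπ_sum : ∑ i, π i = 1)
    (hπA : Matrix.vecMul π A = π) :
    specRad ((1 - α) • (1 : Matrix (Fin n) (Fin n) ℝ) + α • A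
      - Matrix.of (fun _ j => π j)) < 1 := by
  have hA : A ∈ rowStochastic ℝ (Fin n) := mem_rowStochastic_iff_sum.2 ⟨hA_nonneg, hA_row⟩
  set P := (1 - α) • (1 : Matrix (Fin n) (Fin n) ℝ) + α • A
  have hP : P ∈ rowStochastic ℝ (Fin n) :=
    convex_rowStochastic (one_mem _) hA (by linarith) hα0.le (by ring)
  have hP_diag : ∀ i, 0 < P i i := fun i => by
    simp only [P, Matrix.add_apply, Matrix.smul_apply, one_apply_eq, smul_eq_mul]
    nlinarith [hA_nonneg i i]
  set p : Fin n → ℂ := fun i => π i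
  have hp : ∑ i, p i = 1 := by simp only [p]; exact_mod_cast hπ_sum
  have hpP : p ᵥ* P.map Complex.ofReal = p := by
    have hπP : π ᵥ* P = π := by
      rw [vecMul_add, vecMul_smul, vecMul_smul, vecMul_one, hπA]
      module
    ext j
    exact (RingHom.map_vecMul Complex.ofRealHom P π j).symm.trans (congrArg _ (congrFun hπP j))
  refine specRad_lt_of_forall_norm_lt _ one_pos fun z hz => ?_
  obtain ⟨v, hv0, hv⟩ := exists_mulVec_eq_smul_of_mem_roots_charpoly hz
  rcases eq_or_ne z 0 with rfl | hz0
  · simp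
  obtain ⟨hpv, hPv⟩ := dotProduct_eq_zero_and_mulVec_eq_smul hpP hp hz0
    (by rwa [Matrix.map_sub _ Complex.ofReal_sub] at hv)
  rcases eq_one_or_norm_lt_one_of_mulVec_eq_smul hP hP_diag hv0 hPv with rfl | hlt
  · have hAv : A.map Complex.ofReal *ᵥ v = v :=
      map_ofReal_mulVec_eq_self_of_lazy hα0.ne' (by rwa [one_smul] at hPv)
    have hirr : ∀ i j, ∃ k : ℕ, 0 < (A ^ k) i j := fun i j => (hA_irr i j).imp fun _ => And.right
    exact absurd (eq_zero_of_map_ofReal_mulVec_eq_self hA hirr hp hAv hpv) hv0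
  · exact hlt

/-- For an irreducible row-stochastic matrix `A`, `α ∈ (0,1)`,
`A_α = (1-α)I + αA`, and `π` the stochastic left eigenvector of `A`,
the spectral radius of `A_α - 𝟏πᵀ` is strictly less than 1. -/
theorem stmt_2 (n : ℕ) (hn : 1 ≤ n) (A : Matrix (Fin n) (Fin n) ℝ) (α : ℝ)
    (hα0 : 0 < α) (hα1 : α < 1)
    (hA_nonneg : ∀ i j, 0 ≤ A i j)
    (hA_row : ∀ i, ∑ j, A i j = 1)
    (hA_irr : ∀ i j, ∃ k : ℕ, 0 < k ∧ 0 < (A ^ k) i j)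
    (π : Fin n → ℝ) (hπ_nonneg : ∀ i, 0 ≤ π i) (hπ_sum : ∑ i, π i = 1)
    (hπA : Matrix.vecMul π A = π) :
    specRad ((1 - α) • (1 : Matrix (Fin n) (Fin n) ℝ) + α • A
      - Matrix.of (fun _ j => π j)) < 1 :=
  stmt_2_general n A α hα0 hα1 hA_nonneg hA_row hA_irr π hπ_sum hπA
end

section
/- Let M be an n×n real matrix and let ε > 0. Then there exists a function N from n×n real matrices to ℝ that is a submultiplicative matrix norm — i.e., N(X) ≥ 0 with N(X) = 0 iff X = 0, N(cX) = |c|·N(X) for all c ∈ ℝ, N(X+Y) ≤ N(X) + N(Y), and N(XY) ≤ N(X)·N(Y) for all X, Y — such that N(M) ≤ ρ(M) + ε, where ρ(M) denotes the spectral radius of M. -/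
open Set Filter

section comap

variable {𝕜 A B : Type*} [NormedField 𝕜] [Ring A] [Algebra 𝕜 A] [NormedRing B] [NormedAlgebra 𝕜 B]

def AlgebraNorm.comap (φ : A →ₐ[𝕜] B) (hφ : Function.Injective φ) : AlgebraNorm 𝕜 A where
  toFun x := ‖φ x‖
  map_zero' := by simp
  add_le' x y := by simpa only [map_add] using norm_add_le (φ x) (φ y)
  neg' x := by simp
  mul_le' x y := by simpa only [map_mul] using norm_mul_le (φ x) (φ y)
  eq_zero_of_map_eq_zero' x hx := hφ <| by simpa using hx
  smul' c x := by simp only [map_smul, norm_smul]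

end comap

section orbitNorm

variable {𝕜 A : Type*} [NontriviallyNormedField 𝕜] [NormedRing A] [NormedAlgebra 𝕜 A] {a : A}

noncomputable def orbitNorm (a x : A) : ℝ := ⨆ m : ℕ, ‖a ^ m * x‖

lemma norm_pow_mul_le_iSup (ha : BddAbove (range fun m : ℕ => ‖a ^ m‖)) (x : A) (m : ℕ) :
    ‖a ^ m * x‖ ≤ (⨆ m : ℕ, ‖a ^ m‖) * ‖x‖ :=
  (norm_mul_le _ _).trans <| by gcongr; exact le_ciSup ha m

lemma orbitNorm_le (ha : BddAbove (range fun m : ℕ => ‖a ^ m‖)) (x : A) :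
    orbitNorm a x ≤ (⨆ m : ℕ, ‖a ^ m‖) * ‖x‖ :=
  ciSup_le (norm_pow_mul_le_iSup ha x)

lemma norm_pow_mul_le_orbitNorm (ha : BddAbove (range fun m : ℕ => ‖a ^ m‖)) (x : A) (m : ℕ) :
    ‖a ^ m * x‖ ≤ orbitNorm a x :=
  le_ciSup ⟨_, forall_mem_range.2 (norm_pow_mul_le_iSup ha x)⟩ m

lemma norm_le_orbitNorm (ha : BddAbove (range fun m : ℕ => ‖a ^ m‖)) (x : A) :
    ‖x‖ ≤ orbitNorm a x := by
  simpa using norm_pow_mul_le_orbitNorm ha x 0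

lemma orbitNorm_mul_le (ha : BddAbove (range fun m : ℕ => ‖a ^ m‖)) (x y : A) :
    orbitNorm a (x * y) ≤ (⨆ m : ℕ, ‖a ^ m‖) * ‖x‖ * orbitNorm a y := by
  have hC : 0 ≤ ⨆ m : ℕ, ‖a ^ m‖ := Real.iSup_nonneg fun m => norm_nonneg _
  calc orbitNorm a (x * y) ≤ (⨆ m : ℕ, ‖a ^ m‖) * ‖x * y‖ := orbitNorm_le ha _
    _ ≤ (⨆ m : ℕ, ‖a ^ m‖) * (‖x‖ * orbitNorm a y) := by
      gcongr; exact (norm_mul_le _ _).trans (by gcongr; exact norm_le_orbitNorm ha y)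
    _ = _ := (mul_assoc _ _ _).symm

lemma orbitNorm_mul_self_le (ha : BddAbove (range fun m : ℕ => ‖a ^ m‖)) (x : A) :
    orbitNorm a (a * x) ≤ orbitNorm a x :=
  ciSup_le fun m => by simpa only [pow_succ, mul_assoc] using norm_pow_mul_le_orbitNorm ha x (m + 1)

lemma orbitNorm_add_le (ha : BddAbove (range fun m : ℕ => ‖a ^ m‖)) (x y : A) :
    orbitNorm a (x + y) ≤ orbitNorm a x + orbitNorm a y :=
  ciSup_le fun m => by
    rw [mul_add]
    exact (norm_add_le _ _).trans
      (add_le_add (norm_pow_mul_le_orbitNorm ha x m) (norm_pow_mul_le_orbitNorm ha y m))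

lemma orbitNorm_smul (a : A) (c : 𝕜) (x : A) : orbitNorm a (c • x) = ‖c‖ * orbitNorm a x := by
  simp only [orbitNorm, mul_smul_comm, norm_smul]
  exact (Real.mul_iSup_of_nonneg (norm_nonneg c) _).symm

lemma orbitNorm_neg (a x : A) : orbitNorm a (-x) = orbitNorm a x := by
  simp only [orbitNorm, mul_neg, norm_neg]

noncomputable def orbitAddGroupNorm (ha : BddAbove (range fun m : ℕ => ‖a ^ m‖)) :
    AddGroupNorm A where
  toFun := orbitNorm a
  map_zero' := by simp [orbitNorm]
  add_le' := orbitNorm_add_le ha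
  neg' := orbitNorm_neg a
  eq_zero_of_map_eq_zero' x h := norm_le_zero_iff.1 (h ▸ norm_le_orbitNorm ha x)

end orbitNorm

variable {𝕜 A : Type*} [NontriviallyNormedField 𝕜] [NormedRing A] [NormedAlgebra 𝕜 A]

/-- `A` renormed by `orbitNorm a`, which is a norm only when the powers of `a` are bounded:
hence the `Fact` below. -/
def OrbitNormed (_a : A) : Type _ := A

namespace OrbitNormed

variable {a : A} [Fact (BddAbove (range fun m : ℕ => ‖a ^ m‖))]

noncomputable instance : NormedAddCommGroup (OrbitNormed a) :=
  (orbitAddGroupNorm (a := a) Fact.out).toNormedAddCommGroup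

noncomputable instance : NormedSpace 𝕜 (OrbitNormed a) :=
  { (inferInstance : Module 𝕜 A) with
    norm_smul_le c x := (orbitNorm_smul (A := A) a c x).le }

variable (𝕜 a) in
noncomputable def mulLeft : A →ₐ[𝕜] (OrbitNormed a →L[𝕜] OrbitNormed a) where
  toFun x := LinearMap.mkContinuous
    { toFun := fun y : A => x * y
      map_add' := mul_add x
      map_smul' c := mul_smul_comm c x }
    ((⨆ m : ℕ, ‖a ^ m‖) * ‖x‖) (orbitNorm_mul_le (a := a) Fact.out x)
  map_one' := by ext z; exact one_mul (M := A) z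
  map_mul' x y := by ext z; exact mul_assoc (G := A) x y z
  map_zero' := by ext z; exact zero_mul (M₀ := A) z
  map_add' x y := by ext z; exact add_mul (R := A) x y z
  commutes' c := by ext z; exact (Algebra.smul_def (A := A) c z).symm

lemma mulLeft_injective : Function.Injective (mulLeft 𝕜 a) := fun x y h => by
  have h1 : x * 1 = y * 1 := DFunLike.congr_fun h (1 : A)
  rwa [mul_one, mul_one] at h1

end OrbitNormed

theorem exists_algebraNorm_apply_le_one_of_bddAbove {a : A}
    (ha : BddAbove (range fun m : ℕ => ‖a ^ m‖)) : ∃ f : AlgebraNorm 𝕜 A, f a ≤ 1 := by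
  have : Fact _ := ⟨ha⟩
  refine ⟨AlgebraNorm.comap _ (OrbitNormed.mulLeft_injective (𝕜 := 𝕜) (a := a)),
    ContinuousLinearMap.opNorm_le_bound _ zero_le_one fun x => ?_⟩
  rw [one_mul]
  exact orbitNorm_mul_self_le ha x

lemma bddAbove_range_norm_inv_smul_pow {A : Type*} [NormedRing A] [NormedAlgebra ℝ A] {a : A}
    {r : ℝ} (hr : 0 < r) (h : ∀ᶠ m in atTop, ‖a ^ m‖ ≤ r ^ m) :
    BddAbove (range fun m : ℕ => ‖(r⁻¹ • a) ^ m‖) :=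
  IsBoundedUnder.bddAbove_range ⟨1, eventually_map.2 <| h.mono fun m hm => by
    rw [smul_pow, norm_smul, norm_pow, norm_inv, Real.norm_of_nonneg hr.le, inv_pow]
    exact inv_mul_le_one_of_le₀ hm (by positivity)⟩

attribute [local instance] Matrix.linftyOpNormedRing Matrix.linftyOpNormedAlgebra

section specRad

variable {n : ℕ}

lemma specRad_nonneg (M : Matrix (Fin n) (Fin n) ℝ) : 0 ≤ specRad M :=
  Real.sSup_nonneg fun _ ⟨z, _, hz⟩ => hz ▸ norm_nonneg z

lemma norm_le_specRad_of_mem_spectrum {M : Matrix (Fin n) (Fin n) ℝ} {z : ℂ}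
    (hz : z ∈ spectrum ℂ (M.map Complex.ofReal)) : ‖z‖ ≤ specRad M := by
  have hroot : z ∈ (M.map Complex.ofReal).charpoly.roots :=
    (Polynomial.mem_roots (Matrix.charpoly_monic _).ne_zero).2
      (Matrix.mem_spectrum_iff_isRoot_charpoly.1 hz)
  refine le_csSup (Set.Finite.bddAbove ?_) ⟨z, hroot, rfl⟩
  convert (M.map Complex.ofReal).charpoly.roots.toFinset.finite_toSet.image norm using 1
  ext; simp

lemma spectralRadius_map_ofReal_le_specRad (M : Matrix (Fin n) (Fin n) ℝ) :
    spectralRadius ℂ (M.map Complex.ofReal) ≤ ENNReal.ofReal (specRad M) :=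
  iSup₂_le fun _ hz => by
    rw [← enorm_eq_nnnorm, ← ofReal_norm]
    exact ENNReal.ofReal_le_ofReal (norm_le_specRad_of_mem_spectrum hz)

lemma Matrix.linfty_opNorm_map_ofReal (X : Matrix (Fin n) (Fin n) ℝ) :
    ‖X.map Complex.ofReal‖ = ‖X‖ := by
  simp [linfty_opNorm_def]

lemma eventually_norm_pow_lt_of_specRad_lt {M : Matrix (Fin n) (Fin n) ℝ} {r : ℝ}
    (hr : specRad M < r) : ∀ᶠ m in atTop, ‖M ^ m‖ < r ^ m := by
  have hlt : spectralRadius ℂ (M.map Complex.ofReal) < ENNReal.ofReal r :=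
    (spectralRadius_map_ofReal_le_specRad M).trans_lt
      ((ENNReal.ofReal_lt_ofReal_iff ((specRad_nonneg M).trans_lt hr)).2 hr)
  filter_upwards [(spectrum.pow_norm_pow_one_div_tendsto_nhds_spectralRadius _).eventually_lt_const
    hlt, eventually_ne_atTop 0] with m hm hm0
  rw [ENNReal.ofReal_lt_ofReal_iff_of_nonneg (by positivity), one_div] at hm
  have hpow : (M ^ m).map Complex.ofReal = M.map Complex.ofReal ^ m :=
    Matrix.map_pow M Complex.ofRealHom m
  rw [← Matrix.linfty_opNorm_map_ofReal, hpow,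
    ← Real.rpow_inv_natCast_pow (norm_nonneg (M.map Complex.ofReal ^ m)) hm0]
  exact pow_lt_pow_left₀ hm (by positivity) hm0

end specRad

/-- For any real square matrix `M` and any `ε > 0` there exists a
submultiplicative matrix norm `N` with `N(M) ≤ ρ(M) + ε`. -/
theorem stmt_5 (n : ℕ) (M : Matrix (Fin n) (Fin n) ℝ) (ε : ℝ) (hε : 0 < ε) :
    ∃ N : Matrix (Fin n) (Fin n) ℝ → ℝ,
      (∀ X, 0 ≤ N X) ∧
      (∀ X, N X = 0 ↔ X = 0) ∧
      (∀ (c : ℝ) (X), N (c • X) = |c| * N X) ∧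
      (∀ X Y, N (X + Y) ≤ N X + N Y) ∧
      (∀ X Y, N (X * Y) ≤ N X * N Y) ∧
      N M ≤ specRad M + ε := by
  set r := specRad M + ε
  have hr : 0 < r := add_pos_of_nonneg_of_pos (specRad_nonneg M) hε
  have hpow : ∀ᶠ m in atTop, ‖M ^ m‖ ≤ r ^ m :=
    (eventually_norm_pow_lt_of_specRad_lt (lt_add_of_pos_right _ hε)).mono fun _ => le_of_lt
  obtain ⟨f, hf⟩ := exists_algebraNorm_apply_le_one_of_bddAbove (𝕜 := ℝ)
    (bddAbove_range_norm_inv_smul_pow hr hpow)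
  refine ⟨f, apply_nonneg f, fun _ => map_eq_zero_iff_eq_zero f,
    fun c X => by rw [map_smul_eq_mul, Real.norm_eq_abs], map_add_le_add f, map_mul_le_mul f, ?_⟩
  calc f M = f (r • r⁻¹ • M) := by rw [smul_inv_smul₀ hr.ne']
    _ = r * f (r⁻¹ • M) := by rw [map_smul_eq_mul, Real.norm_of_nonneg hr.le]
    _ ≤ r := mul_le_of_le_one_right hr.le hf
end

section
/- Let d ≥ 1, let G be a d×d real matrix with nonnegative entries, and let Θ, ς : ℕ → ℝ^d be sequences of entrywise nonnegative vectors such that Θ(k+1) ≼ G·Θ(k) + ς(k) entrywise for every k ∈ ℕ. Suppose there are constants Π > 0, ς̃ ≥ 0, and 0 < ρ̂ < ξ such that ‖G^j‖ ≤ Π·ρ̂^j for every j ∈ ℕ (where ‖·‖ is the operator norm induced by the Euclidean norm on ℝ^d) and ‖ς(l)‖₂ ≤ ς̃·ξ^l for every l ∈ ℕ. Then for every k ∈ ℕ, ‖Θ(k)‖₂ ≤ Π·‖Θ(0)‖₂·ρ̂^k + (ς̃·Π/(ξ−ρ̂))·ξ^k. -/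
/-!
Unrolling the inequality: since `G` has nonnegative entries, `x ↦ G x` is monotone for the
entrywise order, so `Θ(k)` is dominated entrywise by the solution of the equality recursion,
`G^k Θ(0) + ∑_{l<k} G^(k-1-l) ς(l)`. As `Θ(k) ≽ 0`, the same holds for Euclidean norms, and the
operator-norm bound on `G^j` turns the sum into `Π ς̃ ∑_{l<k} ρ̂^(k-1-l) ξ^l ≤ Π ς̃ ξ^k / (ξ - ρ̂)`.
-/

open Finset

theorem Matrix.monotone_mulVec_of_nonneg {n α : Type*} [Fintype n] [Semiring α] [PartialOrder α]
    [IsOrderedRing α] {A : Matrix n n α} (hA : ∀ i j, 0 ≤ A i j) : Monotone A.mulVec :=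
  fun _ _ hxy i => sum_le_sum fun j _ => mul_le_mul_of_nonneg_left (hxy j) (hA i j)

theorem Monotone.seq_le_seq_of_recurrence {M : Type*} [Add M] [Preorder M] [AddRightMono M]
    {f : M → M} (hf : Monotone f) {x y u : ℕ → M} (h₀ : x 0 ≤ y 0)
    (hx : ∀ k, x (k + 1) ≤ f (x k) + u k) (hy : ∀ k, y (k + 1) = f (y k) + u k) :
    ∀ k, x k ≤ y k
  | 0 => h₀
  | k + 1 => by
    rw [hy k]
    exact (hx k).trans <| by gcongr; exact hf (hf.seq_le_seq_of_recurrence h₀ hx hy k)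

theorem EuclideanSpace.norm_le_norm_of_abs_le {n : Type*} [Fintype n] {x y : EuclideanSpace ℝ n}
    (h : ∀ i, |x i| ≤ |y i|) : ‖x‖ ≤ ‖y‖ := by
  rw [EuclideanSpace.norm_eq, EuclideanSpace.norm_eq]
  gcongr with i
  exact h i

theorem sum_pow_mul_pow_le_div {ρ ξ : ℝ} (hρ : 0 ≤ ρ) (hρξ : ρ < ξ) (k : ℕ) :
    ∑ l ∈ range k, ξ ^ l * ρ ^ (k - 1 - l) ≤ ξ ^ k / (ξ - ρ) := by
  rw [le_div_iff₀ (sub_pos.2 hρξ), geom_sum₂_mul]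
  linarith [pow_nonneg hρ k]

section Duhamel

variable {𝕜 E : Type*}

def duhamel [Semiring 𝕜] [AddCommMonoid E] [Module 𝕜 E] [TopologicalSpace E]
    (T : E →L[𝕜] E) (x₀ : E) (u : ℕ → E) (k : ℕ) : E :=
  (T ^ k) x₀ + ∑ l ∈ range k, (T ^ (k - 1 - l)) (u l)

theorem duhamel_zero [Semiring 𝕜] [AddCommMonoid E] [Module 𝕜 E] [TopologicalSpace E]
    (T : E →L[𝕜] E) (x₀ : E) (u : ℕ → E) : duhamel T x₀ u 0 = x₀ := by
  simp [duhamel]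

theorem duhamel_succ [Semiring 𝕜] [AddCommMonoid E] [Module 𝕜 E] [TopologicalSpace E]
    (T : E →L[𝕜] E) (x₀ : E) (u : ℕ → E) (k : ℕ) :
    duhamel T x₀ u (k + 1) = T (duhamel T x₀ u k) + u k := by
  have hpow : ∀ l ∈ range k, (T ^ (k - l)) (u l) = T ((T ^ (k - 1 - l)) (u l)) := by
    intro l hl
    rw [show k - l = k - 1 - l + 1 by have := mem_range.1 hl; omega, pow_succ']
    rfl
  rw [duhamel, duhamel, sum_range_succ, Nat.add_sub_cancel, Nat.sub_self, pow_zero,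
    sum_congr rfl hpow, map_add, map_sum, pow_succ', add_assoc]
  rfl

theorem norm_duhamel_le [NontriviallyNormedField 𝕜] [NormedAddCommGroup E] [NormedSpace 𝕜 E]
    (T : E →L[𝕜] E) (x₀ : E) (u : ℕ → E) {C s ρ ξ : ℝ} (hρ : 0 ≤ ρ) (hρξ : ρ < ξ)
    (hT : ∀ j, ‖T ^ j‖ ≤ C * ρ ^ j) (hu : ∀ l, ‖u l‖ ≤ s * ξ ^ l) (k : ℕ) :
    ‖duhamel T x₀ u k‖ ≤ C * ‖x₀‖ * ρ ^ k + s * C / (ξ - ρ) * ξ ^ k := by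
  have hC : 0 ≤ C := (norm_nonneg _).trans (by simpa using hT 0)
  have hs : 0 ≤ s := (norm_nonneg _).trans (by simpa using hu 0)
  have hterm : ∀ l, ‖(T ^ (k - 1 - l)) (u l)‖ ≤ s * C * (ξ ^ l * ρ ^ (k - 1 - l)) := fun l =>
    calc ‖(T ^ (k - 1 - l)) (u l)‖ ≤ ‖T ^ (k - 1 - l)‖ * ‖u l‖ := (T ^ (k - 1 - l)).le_opNorm _
      _ ≤ C * ρ ^ (k - 1 - l) * (s * ξ ^ l) :=
        mul_le_mul (hT _) (hu _) (norm_nonneg _) (by positivity)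
      _ = s * C * (ξ ^ l * ρ ^ (k - 1 - l)) := by ring
  calc ‖duhamel T x₀ u k‖
      ≤ ‖T ^ k‖ * ‖x₀‖ + ∑ l ∈ range k, s * C * (ξ ^ l * ρ ^ (k - 1 - l)) :=
        (norm_add_le _ _).trans <| add_le_add ((T ^ k).le_opNorm _)
          ((norm_sum_le _ _).trans (sum_le_sum fun l _ => hterm l))
    _ ≤ C * ρ ^ k * ‖x₀‖ + s * C * (ξ ^ k / (ξ - ρ)) := by
        rw [← mul_sum]
        gcongr
        · exact hT k
        · exact sum_pow_mul_pow_le_div hρ hρξ k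
    _ = C * ‖x₀‖ * ρ ^ k + s * C / (ξ - ρ) * ξ ^ k := by ring

end Duhamel

theorem stmt_14_general (d : ℕ) (G : Matrix (Fin d) (Fin d) ℝ)
    (hG : ∀ i j, 0 ≤ G i j)
    (Θ ς : ℕ → EuclideanSpace ℝ (Fin d))
    (hΘ : ∀ k i, 0 ≤ Θ k i)
    (hrec : ∀ k i, Θ (k + 1) i ≤ (Matrix.toEuclideanCLM (𝕜 := ℝ) G) (Θ k) i + ς k i)
    (Cpi ςt ρ ξ : ℝ) (hρ : 0 < ρ) (hρξ : ρ < ξ)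
    (hGnorm : ∀ j : ℕ, ‖Matrix.toEuclideanCLM (𝕜 := ℝ) (G ^ j)‖ ≤ Cpi * ρ ^ j)
    (hςb : ∀ l : ℕ, ‖ς l‖ ≤ ςt * ξ ^ l) :
    ∀ k : ℕ, ‖Θ k‖ ≤ Cpi * ‖Θ 0‖ * ρ ^ k + ςt * Cpi / (ξ - ρ) * ξ ^ k := by
  set T := Matrix.toEuclideanCLM (𝕜 := ℝ) G
  have hTpow : ∀ j, ‖T ^ j‖ ≤ Cpi * ρ ^ j := fun j => by simpa [T, map_pow] using hGnorm j
  have hdom : ∀ k, (Θ k).ofLp ≤ (duhamel T (Θ 0) ς k).ofLp := by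
    refine (Matrix.monotone_mulVec_of_nonneg hG).seq_le_seq_of_recurrence
      (x := fun k => (Θ k).ofLp) (y := fun k => (duhamel T (Θ 0) ς k).ofLp)
      (u := fun k => (ς k).ofLp)
      (by rw [duhamel_zero]) (fun k i => hrec k i) fun k => ?_
    rw [duhamel_succ, WithLp.ofLp_add, Matrix.ofLp_toEuclideanCLM]
  intro k
  calc ‖Θ k‖ ≤ ‖duhamel T (Θ 0) ς k‖ := EuclideanSpace.norm_le_norm_of_abs_le fun i => by
        rw [abs_of_nonneg (hΘ k i), abs_of_nonneg ((hΘ k i).trans (hdom k i))]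
        exact hdom k i
    _ ≤ Cpi * ‖Θ 0‖ * ρ ^ k + ςt * Cpi / (ξ - ρ) * ξ ^ k :=
        norm_duhamel_le T (Θ 0) ς hρ.le hρξ hTpow hςb k

/-- Linear convergence bound: if `Θ(k+1) ≼ GΘ(k) + ς(k)` entrywise with
nonnegative data, `‖G^j‖ ≤ Π ρ̂^j` in the Euclidean operator norm and `‖ς(l)‖₂ ≤ ς̃ ξ^l`
with `0 < ρ̂ < ξ`, then `‖Θ(k)‖₂ ≤ Π‖Θ(0)‖₂ ρ̂^k + (ς̃Π/(ξ−ρ̂)) ξ^k`. -/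
theorem stmt_14 (d : ℕ) (hd : 1 ≤ d) (G : Matrix (Fin d) (Fin d) ℝ)
    (hG : ∀ i j, 0 ≤ G i j)
    (Θ ς : ℕ → EuclideanSpace ℝ (Fin d))
    (hΘ : ∀ k i, 0 ≤ Θ k i) (hς : ∀ k i, 0 ≤ ς k i)
    (hrec : ∀ k i, Θ (k + 1) i ≤ (Matrix.toEuclideanCLM (𝕜 := ℝ) G) (Θ k) i + ς k i)
    (Cpi ςt ρ ξ : ℝ) (hCpi : 0 < Cpi) (hςt : 0 ≤ ςt) (hρ : 0 < ρ) (hρξ : ρ < ξ)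
    (hGnorm : ∀ j : ℕ, ‖Matrix.toEuclideanCLM (𝕜 := ℝ) (G ^ j)‖ ≤ Cpi * ρ ^ j)
    (hςb : ∀ l : ℕ, ‖ς l‖ ≤ ςt * ξ ^ l) :
    ∀ k : ℕ, ‖Θ k‖ ≤ Cpi * ‖Θ 0‖ * ρ ^ k + ςt * Cpi / (ξ - ρ) * ξ ^ k :=
  stmt_14_general d G hG Θ ς hΘ hrec Cpi ςt ρ ξ hρ hρξ hGnorm hςb
end
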